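/- arXiv:1503.02347 — 3 statements merged into one kernel-verified Lean document; each statement's English description precedes it below -/
import Mathlib

section
/- The subalgebra F of functions on G† is closed under the convolution coproduct: for every f ∈ F, the function on G† × G† given by (ψ₁, ψ₂) ↦ f(ψ₁ ∘ ψ₂) belongs to the ℝ-subalgebra of functions on G† × G† generated by the functions (ψ₁, ψ₂) ↦ g(ψ₁)·h(ψ₂) with g, h ∈ F. -/
/-- A `C^∞` diffeomorphism of `ℝⁿ` (modeled as `Fin n → ℝ`). -/
structure Diffeo (n : ℕ) where
  toFun : (Fin n → ℝ) → (Fin n → ℝ)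
  invFun : (Fin n → ℝ) → (Fin n → ℝ)
  smooth : ContDiff ℝ (⊤ : ℕ∞) toFun
  smooth_inv : ContDiff ℝ (⊤ : ℕ∞) invFun
  left_inv : Function.LeftInverse invFun toFun
  right_inv : Function.RightInverse invFun toFun

/-- Composition of diffeomorphisms. -/
def Diffeo.comp {n : ℕ} (φ ψ : Diffeo n) : Diffeo n where
  toFun := φ.toFun ∘ ψ.toFun
  invFun := ψ.invFun ∘ φ.invFun
  smooth := φ.smooth.comp ψ.smooth
  smooth_inv := ψ.smooth_inv.comp φ.smooth_inv
  left_inv := fun x => by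
    simp only [Function.comp_apply]
    rw [φ.left_inv (ψ.toFun x), ψ.left_inv x]
  right_inv := fun y => by
    simp only [Function.comp_apply]
    rw [ψ.right_inv (φ.invFun y), φ.right_inv y]

/-- The group `G†` of `C^∞` diffeomorphisms of `ℝⁿ` fixing `0`. -/
def Gd (n : ℕ) := {ψ : Diffeo n // ψ.toFun 0 = 0}

/-- Composition in `G†`. -/
def Gd.comp {n : ℕ} (ψ₁ ψ₂ : Gd n) : Gd n :=
  ⟨ψ₁.val.comp ψ₂.val, by
    show ψ₁.val.toFun (ψ₂.val.toFun 0) = 0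
    rw [ψ₂.prop, ψ₁.prop]⟩

/-- The inverse of a diffeomorphism. -/
def Diffeo.symm {n : ℕ} (ψ : Diffeo n) : Diffeo n :=
  ⟨ψ.invFun, ψ.toFun, ψ.smooth_inv, ψ.smooth, ψ.right_inv, ψ.left_inv⟩

/-- Inversion in `G†`. -/
def Gd.inv {n : ℕ} (ψ : Gd n) : Gd n :=
  ⟨ψ.val.symm, by
    show ψ.val.invFun 0 = 0
    have h := ψ.val.left_inv 0
    rw [ψ.prop] at h
    exact h⟩

/-- Partial derivative in the `j`-th coordinate direction. -/
noncomputable def pd {n : ℕ} (j : Fin n) (f : (Fin n → ℝ) → ℝ) : (Fin n → ℝ) → ℝ :=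
  fun x => fderiv ℝ f x (Pi.single j 1)

/-- Iterated partial derivative `∂_{j_k}⋯∂_{j_1}`, with `j 0 = j_1` applied first. -/
noncomputable def itpd {n : ℕ} :
    ∀ {k : ℕ}, (Fin k → Fin n) → ((Fin n → ℝ) → ℝ) → ((Fin n → ℝ) → ℝ)
  | 0, _, f => f
  | _ + 1, j, f => itpd (fun m => j m.succ) (pd (j 0) f)

/-- The Taylor coordinate `β^i_{j_1…j_k}(ψ) = ∂_{j_k}⋯∂_{j_1}ψ^i(0)` on `G†`. -/
noncomputable def betaGen {n : ℕ} (k : ℕ) (j : Fin k → Fin n) (i : Fin n) : Gd n → ℝ :=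
  fun ψ => itpd j (fun x => ψ.val.toFun x i) 0

/-- The function `β^{-1}(ψ) = det(Dψ(0))⁻¹` on `G†`. -/
noncomputable def betaInv {n : ℕ} : Gd n → ℝ :=
  fun ψ => (Matrix.det (Matrix.of fun i j : Fin n => pd j (fun x => ψ.val.toFun x i) 0))⁻¹

/-- Generators of the algebra `F` of Taylor-coordinate functions on `G†`. -/
def genSet (n : ℕ) : Set (Gd n → ℝ) :=
  {g | ∃ (k : ℕ), 1 ≤ k ∧ ∃ (j : Fin k → Fin n) (i : Fin n), g = betaGen k j i} ∪ {betaInv}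

/-- The algebra `F` of functions on `G†` generated by the Taylor coordinates
`β^i_{j_1…j_k}` and `β^{-1}`. -/
noncomputable def Falg (n : ℕ) : Subalgebra ℝ (Gd n → ℝ) := Algebra.adjoin ℝ (genSet n)

/-!
Precomposition with `Gd.comp` is an algebra homomorphism, so it suffices to treat the
generators. `β⁻¹` is multiplicative: since `ψ₂ 0 = 0`, the chain rule makes the Jacobian of
`ψ₁ ∘ ψ₂` at `0` the product of the Jacobians. For `β^i_J`, the chain rule shows that the
partial derivatives of `x ↦ ψ₁ⁱ (ψ₂ x)` stay in the algebra generated by the derivatives of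
`ψ₁ⁱ` at `ψ₂ x` and those of `ψ₂ˡ` at `x`; at `x = 0` these become `β(ψ₁)` and `β(ψ₂)`.
-/

open scoped ContDiff

section PartialDerivatives

variable {n : ℕ}

theorem contDiff_pd (j : Fin n) {f : (Fin n → ℝ) → ℝ} (hf : ContDiff ℝ ∞ f) :
    ContDiff ℝ ∞ (pd j f) :=
  (hf.fderiv_right (by simp)).clm_apply contDiff_const

theorem contDiff_itpd {k : ℕ} (j : Fin k → Fin n) {f : (Fin n → ℝ) → ℝ}
    (hf : ContDiff ℝ ∞ f) : ContDiff ℝ ∞ (itpd j f) := by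
  induction k generalizing f with
  | zero => exact hf
  | succ k ih => exact ih _ (contDiff_pd (j 0) hf)

theorem pd_add (j : Fin n) {f g : (Fin n → ℝ) → ℝ} {x : Fin n → ℝ}
    (hf : DifferentiableAt ℝ f x) (hg : DifferentiableAt ℝ g x) :
    pd j (f + g) x = pd j f x + pd j g x := by
  simp only [pd, fderiv_add hf hg]
  rfl

theorem pd_mul (j : Fin n) {f g : (Fin n → ℝ) → ℝ} {x : Fin n → ℝ}
    (hf : DifferentiableAt ℝ f x) (hg : DifferentiableAt ℝ g x) :
    pd j (f * g) x = pd j f x * g x + f x * pd j g x := by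
  simp [pd, fderiv_mul hf hg]
  ring

theorem pd_const (j : Fin n) (c : ℝ) : pd j (fun _ => c) = 0 := by
  funext x; simp [pd]

theorem pd_comp (j : Fin n) {h : (Fin n → ℝ) → ℝ} {G : (Fin n → ℝ) → Fin n → ℝ}
    {x : Fin n → ℝ} (hh : DifferentiableAt ℝ h (G x)) (hG : DifferentiableAt ℝ G x) :
    pd j (fun y => h (G y)) x = ∑ l, pd l h (G x) * pd j (fun y => G y l) x := by
  have hcoord : ∀ l, pd j (fun y => G y l) x = fderiv ℝ G x (Pi.single j 1) l := fun l => by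
    simp only [pd, fderiv_apply hG l]; rfl
  simp only [hcoord]
  simp only [pd, fderiv_fun_comp x hh hG, ContinuousLinearMap.comp_apply]
  conv_lhs => rw [← Finset.univ_sum_single (fderiv ℝ G x (Pi.single j 1))]
  refine (map_sum _ _ _).trans (Finset.sum_congr rfl fun l _ => ?_)
  rw [mul_comm, ← smul_eq_mul, ← map_smul, ← Pi.single_smul', smul_eq_mul, mul_one]

theorem itpd_snoc {k : ℕ} (m : Fin k → Fin n) (l : Fin n) (f : (Fin n → ℝ) → ℝ) :
    itpd (Fin.snoc m l) f = pd l (itpd m f) := by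
  induction k generalizing f with
  | zero => rfl
  | succ k ih =>
    have htail : (fun i : Fin (k + 1) => (Fin.snoc m l : Fin (k + 2) → Fin n) i.succ)
        = Fin.snoc (fun i : Fin k => m i.succ) l := by
      funext i
      induction i using Fin.lastCases with
      | last => simp [Fin.succ_last]
      | cast i => rw [Fin.succ_castSucc, Fin.snoc_castSucc, Fin.snoc_castSucc]
    have hhead : (Fin.snoc m l : Fin (k + 2) → Fin n) 0 = m 0 := Fin.snoc_castSucc (i := 0) ..
    change itpd _ (pd _ f) = _
    rw [hhead, htail, ih]
    rfl

end PartialDerivatives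

section ParametricFamilies

variable {P : Type*} {n : ℕ} {S : Set (P → (Fin n → ℝ) → ℝ)}

theorem contDiff_of_mem_adjoin (hS : ∀ F ∈ S, ∀ p, ContDiff ℝ ∞ (F p))
    {F : P → (Fin n → ℝ) → ℝ} (hF : F ∈ Algebra.adjoin ℝ S) (p : P) : ContDiff ℝ ∞ (F p) := by
  induction hF using Algebra.adjoin_induction with
  | mem F hF => exact hS F hF p
  | algebraMap r => exact contDiff_const
  | add F G _ _ hF hG => exact hF.add hG
  | mul F G _ _ hF hG => exact hF.mul hG

theorem pd_mem_adjoin (hS : ∀ F ∈ S, ∀ p, ContDiff ℝ ∞ (F p))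
    (hpd : ∀ F ∈ S, ∀ j, (fun p => pd j (F p)) ∈ Algebra.adjoin ℝ S)
    {F : P → (Fin n → ℝ) → ℝ} (hF : F ∈ Algebra.adjoin ℝ S) (j : Fin n) :
    (fun p => pd j (F p)) ∈ Algebra.adjoin ℝ S := by
  have hdiff {G} (hG : G ∈ Algebra.adjoin ℝ S) (p : P) (x : Fin n → ℝ) :
      DifferentiableAt ℝ (G p) x :=
    (contDiff_of_mem_adjoin hS hG p).differentiable (by simp) x
  induction hF using Algebra.adjoin_induction with
  | mem F hF => exact hpd F hF j
  | algebraMap r =>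
    have : (fun p => pd j (algebraMap ℝ (P → (Fin n → ℝ) → ℝ) r p)) = 0 :=
      funext fun _ => pd_const j r
    simpa only [this] using zero_mem _
  | add F G hF hG ihF ihG =>
    have : (fun p => pd j ((F + G) p)) = (fun p => pd j (F p)) + fun p => pd j (G p) :=
      funext fun p => funext fun x => pd_add j (hdiff hF p x) (hdiff hG p x)
    simpa only [this] using add_mem ihF ihG
  | mul F G hF hG ihF ihG =>
    have : (fun p => pd j ((F * G) p)) = (fun p => pd j (F p)) * G + F * fun p => pd j (G p) :=
      funext fun p => funext fun x => pd_mul j (hdiff hF p x) (hdiff hG p x)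
    simpa only [this] using add_mem (mul_mem ihF hG) (mul_mem hF ihG)

theorem itpd_mem_adjoin (hS : ∀ F ∈ S, ∀ p, ContDiff ℝ ∞ (F p))
    (hpd : ∀ F ∈ S, ∀ j, (fun p => pd j (F p)) ∈ Algebra.adjoin ℝ S)
    {F : P → (Fin n → ℝ) → ℝ} (hF : F ∈ Algebra.adjoin ℝ S) {k : ℕ} (j : Fin k → Fin n) :
    (fun p => itpd j (F p)) ∈ Algebra.adjoin ℝ S := by
  induction k generalizing F with
  | zero => exact hF
  | succ k ih => exact ih (pd_mem_adjoin hS hpd hF (j 0)) _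

end ParametricFamilies

section Coproduct

variable {n : ℕ}

theorem Gd.contDiff_coord (ψ : Gd n) (i : Fin n) : ContDiff ℝ ∞ (fun x => ψ.val.toFun x i) :=
  contDiff_pi.mp ψ.val.smooth i

theorem Gd.differentiable (ψ : Gd n) : Differentiable ℝ ψ.val.toFun :=
  ψ.val.smooth.differentiable (by simp)

/-- By the chain rule, every partial derivative of `x ↦ ψ₁ (ψ₂ x)` is a polynomial in these
families of `(ψ₁, ψ₂)`: derivatives of `ψ₁ⁱ` taken at `ψ₂ x`, and derivatives of `ψ₂ˡ`
taken at `x`. -/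
def compJetGen (n : ℕ) : Set (Gd n × Gd n → (Fin n → ℝ) → ℝ) :=
  {F | ∃ (k : ℕ) (m : Fin k → Fin n) (i : Fin n),
      F = fun p x => itpd m (fun y => p.1.val.toFun y i) (p.2.val.toFun x)} ∪
  {F | ∃ (k : ℕ) (m : Fin k → Fin n) (l : Fin n),
      F = fun p x => itpd m (fun y => p.2.val.toFun y l) x}

theorem contDiff_of_mem_compJetGen : ∀ F ∈ compJetGen n, ∀ p, ContDiff ℝ ∞ (F p) := by
  rintro F (⟨k, m, i, rfl⟩ | ⟨k, m, l, rfl⟩) p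
  · exact (contDiff_itpd m (p.1.contDiff_coord i)).comp p.2.val.smooth
  · exact contDiff_itpd m (p.2.contDiff_coord l)

theorem pd_mem_adjoin_compJetGen :
    ∀ F ∈ compJetGen n, ∀ j, (fun p => pd j (F p)) ∈ Algebra.adjoin ℝ (compJetGen n) := by
  rintro F (⟨k, m, i, rfl⟩ | ⟨k, m, l, rfl⟩) j
  · have chain : (fun p : Gd n × Gd n =>
          pd j (fun x => itpd m (fun y => p.1.val.toFun y i) (p.2.val.toFun x)))
        = ∑ l, (fun p x => itpd (Fin.snoc m l) (fun y => p.1.val.toFun y i) (p.2.val.toFun x))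
            * (fun p x => itpd (fun _ : Fin 1 => j) (fun y => p.2.val.toFun y l) x) := by
      funext p x
      rw [pd_comp j ((contDiff_itpd m (p.1.contDiff_coord i)).differentiable (by simp) _)
        (p.2.differentiable x)]
      simp only [Finset.sum_apply, Pi.mul_apply, itpd_snoc]
      rfl
    rw [chain]
    exact sum_mem fun l _ => mul_mem (Algebra.subset_adjoin (Or.inl ⟨_, _, i, rfl⟩))
      (Algebra.subset_adjoin (Or.inr ⟨1, _, l, rfl⟩))
  · exact Algebra.subset_adjoin (Or.inr ⟨k + 1, Fin.snoc m j, l, by simp only [itpd_snoc]⟩)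

def pureTensors (n : ℕ) : Set (Gd n × Gd n → ℝ) :=
  {F | ∃ g ∈ Falg n, ∃ h ∈ Falg n, F = fun p => g p.1 * h p.2}

theorem betaGen_mem_Falg (k : ℕ) (j : Fin k → Fin n) (i : Fin n) : betaGen k j i ∈ Falg n := by
  cases k with
  | zero =>
    have : betaGen 0 j i = 0 := funext fun ψ => congrFun ψ.prop i
    exact this ▸ zero_mem _
  | succ k => exact Algebra.subset_adjoin (Or.inl ⟨k + 1, k.succ_pos, j, i, rfl⟩)

theorem eval_zero_mem_of_mem_compJetGen :
    ∀ F ∈ compJetGen n, (fun p => F p 0) ∈ Algebra.adjoin ℝ (pureTensors n) := by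
  rintro F (⟨k, m, i, rfl⟩ | ⟨k, m, l, rfl⟩)
  · refine Algebra.subset_adjoin ⟨betaGen k m i, betaGen_mem_Falg k m i, 1, one_mem _, ?_⟩
    funext p
    change itpd m _ (p.2.val.toFun 0) = betaGen k m i p.1 * 1
    rw [p.2.prop, mul_one]
    rfl
  · exact Algebra.subset_adjoin ⟨1, one_mem _, betaGen k m l, betaGen_mem_Falg k m l,
      funext fun p => (one_mul _).symm⟩

theorem eval_zero_mem_of_mem_adjoin_compJetGen {F : Gd n × Gd n → (Fin n → ℝ) → ℝ}
    (hF : F ∈ Algebra.adjoin ℝ (compJetGen n)) :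
    (fun p => F p 0) ∈ Algebra.adjoin ℝ (pureTensors n) :=
  let evalZero := (Pi.evalAlgHom ℝ (fun _ : Fin n → ℝ => ℝ) 0).compLeft (Gd n × Gd n)
  Algebra.adjoin_le (S := (Algebra.adjoin ℝ (pureTensors n)).comap evalZero)
    eval_zero_mem_of_mem_compJetGen hF

theorem betaGen_comp_mem_adjoin_pureTensors (k : ℕ) (j : Fin k → Fin n) (i : Fin n) :
    (fun p : Gd n × Gd n => betaGen k j i (p.1.comp p.2)) ∈ Algebra.adjoin ℝ (pureTensors n) :=
  eval_zero_mem_of_mem_adjoin_compJetGen <|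
    itpd_mem_adjoin contDiff_of_mem_compJetGen pd_mem_adjoin_compJetGen
      (Algebra.subset_adjoin (Or.inl ⟨0, Fin.elim0, i, rfl⟩)) j

noncomputable def Gd.jacobian (ψ : Gd n) : Matrix (Fin n) (Fin n) ℝ :=
  Matrix.of fun i j => pd j (fun x => ψ.val.toFun x i) 0

theorem Gd.jacobian_comp (ψ₁ ψ₂ : Gd n) : (ψ₁.comp ψ₂).jacobian = ψ₁.jacobian * ψ₂.jacobian := by
  ext i j
  rw [Matrix.mul_apply]
  change pd j (fun y => ψ₁.val.toFun (ψ₂.val.toFun y) i) 0 = _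
  rw [pd_comp j ((ψ₁.contDiff_coord i).differentiable (by simp) _) (ψ₂.differentiable 0),
    ψ₂.prop]
  rfl

theorem betaInv_comp (ψ₁ ψ₂ : Gd n) : betaInv (ψ₁.comp ψ₂) = betaInv ψ₁ * betaInv ψ₂ := by
  change (ψ₁.comp ψ₂).jacobian.det⁻¹ = ψ₁.jacobian.det⁻¹ * ψ₂.jacobian.det⁻¹
  rw [Gd.jacobian_comp, Matrix.det_mul, mul_inv]

end Coproduct

/-- The algebra `F` is closed under the convolution coproduct: for `f ∈ F`, the function
`(ψ₁, ψ₂) ↦ f(ψ₁ ∘ ψ₂)` lies in the subalgebra of functions on `G† × G†` generated by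
the functions `(ψ₁, ψ₂) ↦ g(ψ₁)·h(ψ₂)` with `g, h ∈ F`. -/
theorem Falg_closed_under_coproduct (n : ℕ) (f : Gd n → ℝ) (hf : f ∈ Falg n) :
    (fun p : Gd n × Gd n => f (Gd.comp p.1 p.2)) ∈
      Algebra.adjoin ℝ
        {F : Gd n × Gd n → ℝ |
          ∃ g ∈ Falg n, ∃ h ∈ Falg n, F = fun p => g p.1 * h p.2} := by
  let comul : (Gd n → ℝ) →ₐ[ℝ] (Gd n × Gd n → ℝ) :=
    AlgHom.pi fun p => Pi.evalAlgHom ℝ (fun _ : Gd n => ℝ) (p.1.comp p.2)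
  suffices Falg n ≤ (Algebra.adjoin ℝ (pureTensors n)).comap comul from this hf
  have betaInv_mem : (betaInv : Gd n → ℝ) ∈ Falg n := Algebra.subset_adjoin (Or.inr rfl)
  refine Algebra.adjoin_le ?_
  rintro g (⟨k, -, j, i, rfl⟩ | rfl)
  · exact betaGen_comp_mem_adjoin_pureTensors k j i
  · exact Algebra.subset_adjoin
      ⟨betaInv, betaInv_mem, betaInv, betaInv_mem, funext fun p => betaInv_comp p.1 p.2⟩
end

section
/- The subalgebra F of functions on G† is closed under the antipode operation: for every f ∈ F, the function ψ ↦ f(ψ⁻¹) again belongs to F. -/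
/-! Differentiating `ψ⁻¹ ∘ ψ = id` `k` times at `0` (Faà di Bruno) writes `D^k(ψ⁻¹)(0)`, with
every argument precomposed by `Dψ(0)`, as a constant minus multilinear expressions in lower
derivatives of `ψ⁻¹` and in derivatives of `ψ`. Precomposing with `D(ψ⁻¹)(0) = Dψ(0)⁻¹`, whose
matrix is `β^{-1}` times the adjugate of the Jacobian, shows by strong induction on `k` that all
coefficients of `D^k(ψ⁻¹)(0)` are polynomials in the generators of `F`. Finally
`β^{-1}(ψ⁻¹) = det Dψ(0)`. -/

open Finset

section CoeffsIn

variable {𝕜 : Type*} [NontriviallyNormedField 𝕜] {X : Type*} (S : Subalgebra 𝕜 (X → 𝕜)) {n : ℕ}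

def CoeffsIn {k : ℕ}
    (T : X → ContinuousMultilinearMap 𝕜 (fun _ : Fin k => Fin n → 𝕜) (Fin n → 𝕜)) : Prop :=
  ∀ (t : Fin k → Fin n) (i : Fin n), (fun x => T x (fun m => Pi.single (t m) 1) i) ∈ S

variable {S} {k : ℕ}

lemma ContinuousMultilinearMap.apply_eq_sum_prod_mul
    (T : ContinuousMultilinearMap 𝕜 (fun _ : Fin k => Fin n → 𝕜) (Fin n → 𝕜))
    (u : Fin k → Fin n → 𝕜) (i : Fin n) :
    T u i = ∑ r : Fin k → Fin n, (∏ l, u l (r l)) * T (fun l => Pi.single (r l) 1) i := by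
  conv_lhs => rw [funext fun l => pi_eq_sum_univ' (u l), T.map_sum]
  simp [T.map_smul_univ, Finset.sum_apply]

lemma CoeffsIn.apply_mem
    {T : X → ContinuousMultilinearMap 𝕜 (fun _ : Fin k => Fin n → 𝕜) (Fin n → 𝕜)}
    (hT : CoeffsIn S T) {u : X → Fin k → Fin n → 𝕜} (hu : ∀ l b, (fun x => u x l b) ∈ S)
    (i : Fin n) : (fun x => T x (u x) i) ∈ S := by
  have h : (fun x => T x (u x) i)
      = ∑ r : Fin k → Fin n,
          (∏ l, fun x => u x l (r l)) * fun x => T x (fun l => Pi.single (r l) 1) i := by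
    funext x
    rw [(T x).apply_eq_sum_prod_mul]
    simp [Finset.sum_apply, Finset.prod_apply]
  rw [h]
  exact sum_mem fun r _ => mul_mem (prod_mem fun l _ => hu l (r l)) (hT r i)

lemma CoeffsIn.compContinuousLinearMap
    {T : X → ContinuousMultilinearMap 𝕜 (fun _ : Fin k => Fin n → 𝕜) (Fin n → 𝕜)}
    (hT : CoeffsIn S T) {L : X → (Fin n → 𝕜) →L[𝕜] (Fin n → 𝕜)}
    (hL : ∀ a b, (fun x => LinearMap.toMatrix' (L x : (Fin n → 𝕜) →ₗ[𝕜] (Fin n → 𝕜)) a b) ∈ S) :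
    CoeffsIn S fun x => (T x).compContinuousLinearMap fun _ => L x :=
  fun t => hT.apply_mem fun l b => hL b (t l)

lemma CoeffsIn.compAlongOrderedFinpartition (c : OrderedFinpartition k)
    {p q : X → FormalMultilinearSeries 𝕜 (Fin n → 𝕜) (Fin n → 𝕜)}
    (hp : CoeffsIn S fun x => p x c.length) (hq : ∀ m, CoeffsIn S fun x => q x (c.partSize m)) :
    CoeffsIn S fun x => (p x).compAlongOrderedFinpartition (q x) c :=
  fun t => hp.apply_mem fun m => hq m (t ∘ c.emb m)

lemma coeffsIn_const (T : ContinuousMultilinearMap 𝕜 (fun _ : Fin k => Fin n → 𝕜) (Fin n → 𝕜)) :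
    CoeffsIn S fun _ => T :=
  fun t i => S.algebraMap_mem (T (fun m => Pi.single (t m) 1) i)

lemma CoeffsIn.sub
    {T T' : X → ContinuousMultilinearMap 𝕜 (fun _ : Fin k => Fin n → 𝕜) (Fin n → 𝕜)}
    (hT : CoeffsIn S T) (hT' : CoeffsIn S T') : CoeffsIn S fun x => T x - T' x :=
  fun t i => sub_mem (hT t i) (hT' t i)

lemma coeffsIn_sum {ι : Type*} (s : Finset ι)
    {T : ι → X → ContinuousMultilinearMap 𝕜 (fun _ : Fin k => Fin n → 𝕜) (Fin n → 𝕜)}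
    (hT : ∀ c ∈ s, CoeffsIn S (T c)) : CoeffsIn S fun x => ∑ c ∈ s, T c x := by
  intro t i
  have h : (fun x => (∑ c ∈ s, T c x) (fun m => Pi.single (t m) 1) i)
      = ∑ c ∈ s, fun x => T c x (fun m => Pi.single (t m) 1) i := by
    funext x
    simp [Finset.sum_apply]
  rw [h]
  exact sum_mem fun c hc => hT c hc t i

end CoeffsIn

section MatrixEntries

variable {R : Type*} [CommRing R] {X : Type*} (S : Subalgebra R (X → R))
  {ι : Type*} [Fintype ι] [DecidableEq ι] {M : X → Matrix ι ι R}

lemma Subalgebra.exists_matrix_lift (hM : ∀ a b, (fun x => M x a b) ∈ S) :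
    ∃ N : Matrix ι ι S, ∀ x, ((Pi.evalRingHom _ x).comp (S.val : S →+* X → R)).mapMatrix N = M x :=
  ⟨Matrix.of fun a b => ⟨_, hM a b⟩, fun _ => rfl⟩

lemma Subalgebra.det_mem_of_entries_mem (hM : ∀ a b, (fun x => M x a b) ∈ S) :
    (fun x => (M x).det) ∈ S := by
  obtain ⟨N, hN⟩ := S.exists_matrix_lift hM
  have h : (fun x => (M x).det) = (N.det : X → R) := by
    funext x
    rw [← hN x, ← RingHom.map_det]
    rfl
  exact h ▸ N.det.2

lemma Subalgebra.adjugate_entry_mem_of_entries_mem (hM : ∀ a b, (fun x => M x a b) ∈ S)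
    (a b : ι) :
    (fun x => (M x).adjugate a b) ∈ S := by
  obtain ⟨N, hN⟩ := S.exists_matrix_lift hM
  have h : (fun x => (M x).adjugate a b) = (N.adjugate a b : X → R) := by
    funext x
    rw [← hN x, ← RingHom.map_adjugate]
    rfl
  exact h ▸ (N.adjugate a b).2

end MatrixEntries

lemma Subalgebra.inv_entry_mem_of_entries_mem {K : Type*} [Field K] {X : Type*}
    {S : Subalgebra K (X → K)} {ι : Type*} [Fintype ι] [DecidableEq ι] {M : X → Matrix ι ι K}
    (hM : ∀ a b, (fun x => M x a b) ∈ S) (hdet : (fun x => (M x).det⁻¹) ∈ S) (a b : ι) :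
    (fun x => (M x)⁻¹ a b) ∈ S := by
  have h : (fun x => (M x)⁻¹ a b) = (fun x => (M x).det⁻¹) * fun x => (M x).adjugate a b := by
    funext x
    simp [Matrix.inv_def, Ring.inverse_eq_inv]
  rw [h]
  exact mul_mem hdet (S.adjugate_entry_mem_of_entries_mem hM a b)

namespace OrderedFinpartition

lemma eq_atomic_of_length_eq {k : ℕ} (c : OrderedFinpartition k) (h : c.length = k) :
    c = atomic k := by
  have hsum : ∑ m, c.partSize m = ∑ _m : Fin c.length, 1 := by
    have hcard := c.sum_sigma_eq_sum fun _ => 1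
    simp only [sum_const, card_univ, Fintype.card_fin, smul_eq_mul, mul_one] at hcard
    simp [hcard, h]
  have hsize (m) : c.partSize m = 1 :=
    ((Finset.sum_eq_sum_iff_of_le fun m _ => c.partSize_pos m).1 hsum.symm m (mem_univ m)).symm
  rcases c with ⟨length, partSize, _, emb, _, parts_strictMono, _, _⟩
  dsimp only at h hsize
  subst h
  obtain rfl : partSize = fun _ => 1 := funext hsize
  have hemb (m) (r) : emb m r = m := by
    rw [Subsingleton.elim r 0]
    exact parts_strictMono.apply_eq
  rw [OrderedFinpartition.ext_iff]
  exact ⟨rfl, HEq.rfl, heq_of_eq (funext₂ hemb)⟩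

lemma length_lt_of_ne_atomic {k : ℕ} {c : OrderedFinpartition k} (hc : c ≠ atomic k) :
    c.length < k :=
  c.length_le.lt_of_ne fun h => hc (c.eq_atomic_of_length_eq h)

end OrderedFinpartition

lemma FormalMultilinearSeries.compAlongOrderedFinpartition_atomic
    {𝕜 : Type*} [NontriviallyNormedField 𝕜] {E F G : Type*}
    [NormedAddCommGroup E] [NormedSpace 𝕜 E] [NormedAddCommGroup F] [NormedSpace 𝕜 F]
    [NormedAddCommGroup G] [NormedSpace 𝕜 G]
    (q : FormalMultilinearSeries 𝕜 F G) (p : FormalMultilinearSeries 𝕜 E F) (k : ℕ) :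
    q.compAlongOrderedFinpartition p (OrderedFinpartition.atomic k)
      = (q k).compContinuousLinearMap fun _ => continuousMultilinearCurryFin1 𝕜 E F (p 1) := by
  ext v
  rfl

lemma iteratedFDeriv_apply_coord {𝕜 : Type*} [NontriviallyNormedField 𝕜] {E : Type*}
    [NormedAddCommGroup E] [NormedSpace 𝕜 E] {ι : Type*} [Fintype ι] {g : E → ι → 𝕜} {x : E}
    {k : ℕ} (hg : ContDiffAt 𝕜 k g x) (i : ι) (v : Fin k → E) :
    iteratedFDeriv 𝕜 k (fun y => g y i) x v = iteratedFDeriv 𝕜 k g x v i := by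
  rw [show (fun y => g y i) = ContinuousLinearMap.proj (R := 𝕜) i ∘ g from rfl,
    ContinuousLinearMap.iteratedFDeriv_comp_left _ hg le_rfl]
  rfl

/- `itpd` differentiates first in direction `j 0`, and the first derivative taken fills the last
slot of `iteratedFDeriv`; hence the reversal. -/
lemma itpd_eq_iteratedFDeriv {n : ℕ} : ∀ {k : ℕ} (j : Fin k → Fin n) {f : (Fin n → ℝ) → ℝ},
    ContDiff ℝ k f → ∀ x : Fin n → ℝ,
    itpd j f x = iteratedFDeriv ℝ k f x fun m => Pi.single (j m.rev) 1
  | 0, j, f, _, x => by simp [itpd]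
  | k + 1, j, f, hf, x => by
    have hpd : pd (j 0) f = ContinuousLinearMap.apply ℝ ℝ (Pi.single (j 0) 1) ∘ fderiv ℝ f := rfl
    have hd : ContDiff ℝ k (fderiv ℝ f) := hf.fderiv_right (by norm_cast)
    show itpd (fun m => j m.succ) (pd (j 0) f) x = _
    rw [itpd_eq_iteratedFDeriv _ (hpd ▸ (ContinuousLinearMap.apply ℝ ℝ _).contDiff.comp hd),
      iteratedFDeriv_succ_apply_right, hpd,
      ContinuousLinearMap.iteratedFDeriv_comp_left _ hd.contDiffAt le_rfl]
    simp only [ContinuousLinearMap.compContinuousMultilinearMap_coe, Function.comp_apply,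
      ContinuousLinearMap.apply_apply, Fin.rev_last]
    congr 2
    funext m
    simp only [Fin.init, Fin.rev_castSucc]

namespace Gd

variable {n : ℕ}

lemma contDiff_toFun (ψ : Gd n) (k : ℕ) : ContDiff ℝ k ψ.val.toFun :=
  ψ.val.smooth.of_le (mod_cast le_top)

lemma betaGen_eq_iteratedFDeriv (k : ℕ) (j : Fin k → Fin n) (i : Fin n) (ψ : Gd n) :
    betaGen k j i ψ = iteratedFDeriv ℝ k ψ.val.toFun 0 (fun m => Pi.single (j m.rev) 1) i := by
  rw [betaGen, itpd_eq_iteratedFDeriv j (contDiff_pi.1 (ψ.contDiff_toFun k) i),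
    iteratedFDeriv_apply_coord (ψ.contDiff_toFun k).contDiffAt]

noncomputable def jacobian_s8 (ψ : Gd n) : Matrix (Fin n) (Fin n) ℝ :=
  LinearMap.toMatrix' (fderiv ℝ ψ.val.toFun 0 : (Fin n → ℝ) →ₗ[ℝ] Fin n → ℝ)

lemma betaInv_eq_inv_det_jacobian (ψ : Gd n) : betaInv ψ = (jacobian_s8 ψ).det⁻¹ := by
  unfold betaInv pd jacobian_s8
  congr 2
  ext i j
  show fderiv ℝ (fun x => ψ.val.toFun x i) 0 (Pi.single j 1)
    = fderiv ℝ ψ.val.toFun 0 (Pi.single j 1) i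
  rw [fderiv_apply ((ψ.contDiff_toFun 1).differentiable one_ne_zero 0) i]
  rfl

lemma fderiv_comp_fderiv_inv (ψ : Gd n) :
    (fderiv ℝ ψ.val.toFun 0).comp (fderiv ℝ (Gd.inv ψ).val.toFun 0)
      = ContinuousLinearMap.id ℝ (Fin n → ℝ) := by
  have h := fderiv_comp (0 : Fin n → ℝ) ((ψ.contDiff_toFun 1).differentiable one_ne_zero _)
    (((Gd.inv ψ).contDiff_toFun 1).differentiable one_ne_zero 0)
  rw [(Gd.inv ψ).prop, show ψ.val.toFun ∘ (Gd.inv ψ).val.toFun = id from funext ψ.val.right_inv,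
    fderiv_id] at h
  exact h.symm

lemma jacobian_mul_jacobian_inv (ψ : Gd n) : jacobian_s8 ψ * jacobian_s8 (Gd.inv ψ) = 1 := by
  rw [jacobian_s8, jacobian_s8, ← LinearMap.toMatrix'_comp, ← ContinuousLinearMap.toLinearMap_comp,
    fderiv_comp_fderiv_inv, ContinuousLinearMap.coe_id, LinearMap.toMatrix'_id]

lemma jacobian_inv (ψ : Gd n) : jacobian_s8 (Gd.inv ψ) = (jacobian_s8 ψ)⁻¹ :=
  (Matrix.inv_eq_right_inv (jacobian_mul_jacobian_inv ψ)).symm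

lemma inv_det_jacobian_inv (ψ : Gd n) : (jacobian_s8 (Gd.inv ψ)).det⁻¹ = (jacobian_s8 ψ).det := by
  refine inv_eq_of_mul_eq_one_left ?_
  rw [← Matrix.det_mul, jacobian_mul_jacobian_inv, Matrix.det_one]

open OrderedFinpartition in
lemma iteratedFDeriv_inv_eq (ψ : Gd n) (k : ℕ) :
    iteratedFDeriv ℝ k (Gd.inv ψ).val.toFun 0
      = (iteratedFDeriv ℝ k (fun x : Fin n → ℝ => x) 0
          - ∑ c ∈ univ.erase (atomic k),
              (ftaylorSeries ℝ (Gd.inv ψ).val.toFun 0).compAlongOrderedFinpartition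
                (ftaylorSeries ℝ ψ.val.toFun 0) c).compContinuousLinearMap
          fun _ => fderiv ℝ (Gd.inv ψ).val.toFun 0 := by
  set φ := (Gd.inv ψ).val.toFun
  have hfdb : iteratedFDeriv ℝ k (fun x : Fin n → ℝ => x) 0
      = (ftaylorSeries ℝ φ 0).taylorComp (ftaylorSeries ℝ ψ.val.toFun 0) k := by
    have h := iteratedFDeriv_comp ((Gd.inv ψ).contDiff_toFun k).contDiffAt
      (ψ.contDiff_toFun k).contDiffAt (x := 0) le_rfl
    rwa [show φ ∘ ψ.val.toFun = fun x => x from funext ψ.val.left_inv, ψ.prop] at h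
  -- Only the atomic partition involves `D^k φ`; all others involve lower derivatives of `φ`.
  have hsplit : (ftaylorSeries ℝ φ 0).taylorComp (ftaylorSeries ℝ ψ.val.toFun 0) k
      = (iteratedFDeriv ℝ k φ 0).compContinuousLinearMap (fun _ => fderiv ℝ ψ.val.toFun 0)
        + ∑ c ∈ univ.erase (atomic k), (ftaylorSeries ℝ φ 0).compAlongOrderedFinpartition
              (ftaylorSeries ℝ ψ.val.toFun 0) c := by
    rw [FormalMultilinearSeries.taylorComp, ← add_sum_erase _ _ (mem_univ (atomic k)),
      FormalMultilinearSeries.compAlongOrderedFinpartition_atomic]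
    congr
    ext v
    simp [ftaylorSeries, iteratedFDeriv_one_apply]
  have hinv (w : Fin n → ℝ) : fderiv ℝ ψ.val.toFun 0 (fderiv ℝ φ 0 w) = w :=
    DFunLike.congr_fun (fderiv_comp_fderiv_inv ψ) w
  calc iteratedFDeriv ℝ k φ 0
      = ContinuousMultilinearMap.compContinuousLinearMap
          ((iteratedFDeriv ℝ k φ 0).compContinuousLinearMap fun _ => fderiv ℝ ψ.val.toFun 0)
          fun _ => fderiv ℝ φ 0 := by
        ext w
        simp [hinv]
    _ = _ := by rw [hfdb, hsplit, add_sub_cancel_right]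

lemma coeffsIn_iteratedFDeriv {k : ℕ} (hk : 1 ≤ k) :
    CoeffsIn (Falg n) fun ψ : Gd n => iteratedFDeriv ℝ k ψ.val.toFun 0 := by
  intro t i
  have h : (fun ψ : Gd n => iteratedFDeriv ℝ k ψ.val.toFun 0 (fun m => Pi.single (t m) 1) i)
      = betaGen k (fun m => t m.rev) i := by
    funext ψ
    simp [betaGen_eq_iteratedFDeriv]
  rw [h]
  exact Algebra.subset_adjoin (Or.inl ⟨k, hk, _, i, rfl⟩)

lemma jacobian_entry_mem (a b : Fin n) : (fun ψ : Gd n => jacobian_s8 ψ a b) ∈ Falg n := by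
  simpa [jacobian_s8, iteratedFDeriv_one_apply] using coeffsIn_iteratedFDeriv le_rfl (fun _ => b) a

lemma inv_det_jacobian_mem : (fun ψ : Gd n => (jacobian_s8 ψ).det⁻¹) ∈ Falg n := by
  simp_rw [← betaInv_eq_inv_det_jacobian]
  exact Algebra.subset_adjoin (Or.inr rfl)

lemma jacobian_inv_entry_mem (a b : Fin n) :
    (fun ψ : Gd n => jacobian_s8 (Gd.inv ψ) a b) ∈ Falg n := by
  simp_rw [jacobian_inv]
  exact Subalgebra.inv_entry_mem_of_entries_mem jacobian_entry_mem inv_det_jacobian_mem a b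

lemma coeffsIn_iteratedFDeriv_inv (k : ℕ) (hk : 1 ≤ k) :
    CoeffsIn (Falg n) fun ψ : Gd n => iteratedFDeriv ℝ k (Gd.inv ψ).val.toFun 0 := by
  induction k using Nat.strong_induction_on with
  | _ k ih =>
    simp_rw [iteratedFDeriv_inv_eq]
    refine CoeffsIn.compContinuousLinearMap
      ((coeffsIn_const _).sub (coeffsIn_sum _ fun c hc => ?_)) jacobian_inv_entry_mem
    exact CoeffsIn.compAlongOrderedFinpartition c
      (ih _ (OrderedFinpartition.length_lt_of_ne_atomic (ne_of_mem_erase hc)) (c.length_pos hk))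
      fun m => coeffsIn_iteratedFDeriv (c.partSize_pos m)

end Gd

/-- The algebra `F` is closed under the antipode: for `f ∈ F`, the function
`ψ ↦ f(ψ⁻¹)` again belongs to `F`. -/
theorem Falg_closed_under_antipode (n : ℕ) (f : Gd n → ℝ) (hf : f ∈ Falg n) :
    (fun ψ : Gd n => f (Gd.inv ψ)) ∈ Falg n := by
  induction hf using Algebra.adjoin_induction with
  | mem g hg =>
    rcases hg with ⟨k, hk, j, i, rfl⟩ | rfl
    · simpa only [Gd.betaGen_eq_iteratedFDeriv] using
        Gd.coeffsIn_iteratedFDeriv_inv k hk (fun m => j m.rev) i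
    · simp_rw [Gd.betaInv_eq_inv_det_jacobian, Gd.inv_det_jacobian_inv]
      exact (Falg n).det_mem_of_entries_mem Gd.jacobian_entry_mem
  | algebraMap r => exact (Falg n).algebraMap_mem r
  | add _ _ _ _ hx hy => exact add_mem hx hy
  | mul _ _ _ _ hx hy => exact mul_mem hx hy
end

section
/- Let ψ be a C∞ diffeomorphism of ℝ with ψ'(x) > 0 for all x, and let f₀, f₁ ∈ C_c^∞(ℝ). Then ∫_ℝ f₀'(x)·f₁(ψ⁻¹(x))·log(ψ'(ψ⁻¹(x))) dx + ∫_ℝ f₁'(y)·f₀(ψ(y))·log(ψ'(y)) dy = −∫_ℝ f₀(ψ(y))·f₁(y)·(ψ''(y)/ψ'(y)) dy, all integrals with respect to Lebesgue measure. -/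
open MeasureTheory

/-! Put `a := (f₀ ∘ ψ) · log ψ'`. Integrating by parts against the compactly supported `f₁`,
`∫ f₁' a = -∫ f₁ a'`, and `a' = (f₀' ∘ ψ) ψ' log ψ' + (f₀ ∘ ψ) ψ''/ψ'`. The first summand,
after the substitution `x = ψ y`, is the integral of `f₀'(x) f₁(ψ⁻¹ x) log ψ'(ψ⁻¹ x)`;
the second one is the right-hand side. -/

theorem integral_eq_integral_abs_deriv_smul_comp_of_bijective {E : Type*}
    [NormedAddCommGroup E] [NormedSpace ℝ E] {ψ : ℝ → ℝ} (hψ : Differentiable ℝ ψ)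
    (hbij : Function.Bijective ψ) (g : ℝ → E) :
    ∫ x, g x = ∫ y, |deriv ψ y| • g (ψ y) := by
  rw [← setIntegral_univ, ← hbij.surjective.range_eq, ← Set.image_univ,
    integral_image_eq_integral_abs_deriv_smul MeasurableSet.univ
      (fun y _ => (hψ y).hasDerivAt.hasDerivWithinAt) hbij.injective.injOn g,
    setIntegral_univ]

theorem integral_mul_deriv_eq_neg_integral_deriv_mul_of_hasCompactSupport {A : Type*}
    [NormedRing A] [NormedAlgebra ℝ A] {u v : ℝ → A} (hu : ContDiff ℝ 1 u) (hv : ContDiff ℝ 1 v)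
    (hvc : HasCompactSupport v) :
    ∫ x, u x * deriv v x = -∫ x, deriv u x * v x := by
  have hu' : Continuous (deriv u) := hu.continuous_deriv le_rfl
  have hv' : Continuous (deriv v) := hv.continuous_deriv le_rfl
  exact integral_mul_deriv_eq_deriv_mul_of_integrable
    (fun x _ => (hu.differentiable one_ne_zero x).hasDerivAt)
    (fun x _ => (hv.differentiable one_ne_zero x).hasDerivAt)
    ((hu.continuous.mul hv').integrable_of_hasCompactSupport hvc.deriv.mul_left)
    ((hu'.mul hv.continuous).integrable_of_hasCompactSupport hvc.mul_left)
    ((hu.continuous.mul hv.continuous).integrable_of_hasCompactSupport hvc.mul_left)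

theorem integral_add_mul_of_hasCompactSupport {p q v : ℝ → ℝ} (hp : Continuous p)
    (hq : Continuous q) (hv : Continuous v) (hvc : HasCompactSupport v) :
    ∫ x, (p x + q x) * v x = (∫ x, p x * v x) + ∫ x, q x * v x := by
  simp only [add_mul]
  exact integral_add ((hp.mul hv).integrable_of_hasCompactSupport hvc.mul_left)
    ((hq.mul hv).integrable_of_hasCompactSupport hvc.mul_left)

theorem hasDerivAt_comp_mul_log_deriv {f ψ : ℝ → ℝ} {y : ℝ} (hf : DifferentiableAt ℝ f (ψ y))
    (hψ : DifferentiableAt ℝ ψ y) (hψ' : DifferentiableAt ℝ (deriv ψ) y) (hne : deriv ψ y ≠ 0) :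
    HasDerivAt (fun z => f (ψ z) * Real.log (deriv ψ z))
      (deriv f (ψ y) * deriv ψ y * Real.log (deriv ψ y) +
        f (ψ y) * (deriv (deriv ψ) y / deriv ψ y)) y :=
  (hf.hasDerivAt.comp y hψ.hasDerivAt).mul (hψ'.hasDerivAt.log hne)

theorem integral_deriv_mul_comp_mul_log_deriv {f₀ f₁ ψ : ℝ → ℝ} (hf₀ : ContDiff ℝ 1 f₀)
    (hf₁ : ContDiff ℝ 1 f₁) (hf₁c : HasCompactSupport f₁) (hψ : ContDiff ℝ 2 ψ)
    (hne : ∀ y, deriv ψ y ≠ 0) :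
    ∫ y, deriv f₁ y * f₀ (ψ y) * Real.log (deriv ψ y) =
      -((∫ y, deriv f₀ (ψ y) * deriv ψ y * Real.log (deriv ψ y) * f₁ y) +
        ∫ y, f₀ (ψ y) * (deriv (deriv ψ) y / deriv ψ y) * f₁ y) := by
  have hψ' : ContDiff ℝ 1 (deriv ψ) := (contDiff_succ_iff_deriv.mp hψ).2.2
  have hA : Continuous fun y => deriv f₀ (ψ y) * deriv ψ y * Real.log (deriv ψ y) :=
    (((hf₀.continuous_deriv le_rfl).comp hψ.continuous).mul hψ'.continuous).mul
      (hψ'.continuous.log hne)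
  have hB : Continuous fun y => f₀ (ψ y) * (deriv (deriv ψ) y / deriv ψ y) :=
    (hf₀.continuous.comp hψ.continuous).mul
      ((hψ'.continuous_deriv le_rfl).div hψ'.continuous hne)
  rw [← integral_add_mul_of_hasCompactSupport hA hB hf₁.continuous hf₁c]
  calc
    _ = ∫ y, (f₀ (ψ y) * Real.log (deriv ψ y)) * deriv f₁ y := by congr 1 with y; ring
    _ = -∫ y, deriv (fun y => f₀ (ψ y) * Real.log (deriv ψ y)) y * f₁ y :=
      integral_mul_deriv_eq_neg_integral_deriv_mul_of_hasCompactSupport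
        ((hf₀.comp (hψ.of_le (by norm_num))).mul (hψ'.log hne)) hf₁ hf₁c
    _ = _ := by
      simp only [fun y => (hasDerivAt_comp_mul_log_deriv (hf₀.differentiable one_ne_zero (ψ y))
        (hψ.differentiable (by norm_num) y) (hψ'.differentiable one_ne_zero y) (hne y)).deriv]

theorem transgression_identity_general (ψ ψinv : ℝ → ℝ)
    (hψ : ContDiff ℝ (⊤ : ℕ∞) ψ)
    (hleft : Function.LeftInverse ψinv ψ) (hright : Function.RightInverse ψinv ψ)
    (hpos : ∀ x, 0 < deriv ψ x)
    (f₀ f₁ : ℝ → ℝ)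
    (hf₀ : ContDiff ℝ (⊤ : ℕ∞) f₀)
    (hf₁ : ContDiff ℝ (⊤ : ℕ∞) f₁) (hf₁c : HasCompactSupport f₁) :
    (∫ x, deriv f₀ x * f₁ (ψinv x) * Real.log (deriv ψ (ψinv x))) +
        (∫ y, deriv f₁ y * f₀ (ψ y) * Real.log (deriv ψ y)) =
      -∫ y, f₀ (ψ y) * f₁ y * (deriv (deriv ψ) y / deriv ψ y) := by
  have hsubst : ∫ x, deriv f₀ x * f₁ (ψinv x) * Real.log (deriv ψ (ψinv x)) =
      ∫ y, deriv f₀ (ψ y) * deriv ψ y * Real.log (deriv ψ y) * f₁ y := by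
    rw [integral_eq_integral_abs_deriv_smul_comp_of_bijective (hψ.differentiable (by simp))
      ⟨hleft.injective, hright.surjective⟩]
    congr 1 with y
    rw [hleft y, abs_of_pos (hpos y), smul_eq_mul]
    ring
  rw [hsubst, integral_deriv_mul_comp_mul_log_deriv (hf₀.of_le (by simp)) (hf₁.of_le (by simp))
    hf₁c (hψ.of_le (WithTop.coe_le_coe.mpr le_top)) fun y => (hpos y).ne']
  simp only [mul_right_comm _ (f₁ _)]
  ring

/-- The transgression identity underlying `B(ũ₁) = C₁`: for a `C^∞` diffeomorphism `ψ`
of `ℝ` with `ψ' > 0` and `f₀, f₁ ∈ C_c^∞(ℝ)`,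
`∫ f₀'(x)·f₁(ψ⁻¹(x))·log(ψ'(ψ⁻¹(x))) dx + ∫ f₁'(y)·f₀(ψ(y))·log(ψ'(y)) dy
  = −∫ f₀(ψ(y))·f₁(y)·(ψ''(y)/ψ'(y)) dy`. -/
theorem transgression_identity (ψ ψinv : ℝ → ℝ)
    (hψ : ContDiff ℝ (⊤ : ℕ∞) ψ) (hψinv : ContDiff ℝ (⊤ : ℕ∞) ψinv)
    (hleft : Function.LeftInverse ψinv ψ) (hright : Function.RightInverse ψinv ψ)
    (hpos : ∀ x, 0 < deriv ψ x)
    (f₀ f₁ : ℝ → ℝ)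
    (hf₀ : ContDiff ℝ (⊤ : ℕ∞) f₀) (hf₀c : HasCompactSupport f₀)
    (hf₁ : ContDiff ℝ (⊤ : ℕ∞) f₁) (hf₁c : HasCompactSupport f₁) :
    (∫ x, deriv f₀ x * f₁ (ψinv x) * Real.log (deriv ψ (ψinv x))) +
        (∫ y, deriv f₁ y * f₀ (ψ y) * Real.log (deriv ψ y)) =
      -∫ y, f₀ (ψ y) * f₁ y * (deriv (deriv ψ) y / deriv ψ y) :=
  transgression_identity_general ψ ψinv hψ hleft hright hpos f₀ f₁ hf₀ hf₁ hf₁c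
end
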